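/- arXiv:2408.05511 — 2 statements merged into one kernel-verified Lean document; each statement's English description precedes it below -/
import Mathlib

section
/- For every k ≥ 1, the set {ρₖ(e_μ) mod 2ℤ[i] : μ ⊆ {1, …, 2k}} of 2^k × 2^k matrices over ℤ[i]/2ℤ[i] has exactly 2^{k+1} elements; moreover every matrix M in this set satisfies M·M = identity over ℤ[i]/2ℤ[i]. In other words, the 2^{2k} generators of the Clifford algebra Cl(ℂ^{2k}) give exactly 2^{k+1} distinct actions on the 2-torsion points of the Dirac spinor torus, each of which is an involution. -/
open Matrix

namespace DiracSpinor

/-- The Gaussian integer `i`. -/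
def gi : GaussianInt := ⟨0, 1⟩

/-- `E₁ = [[i,0],[0,−i]]`. -/
def E1 : Matrix (Fin 2) (Fin 2) GaussianInt := !![gi, 0; 0, -gi]

/-- `E₂ = [[0,i],[i,0]]`. -/
def E2 : Matrix (Fin 2) (Fin 2) GaussianInt := !![0, gi; gi, 0]

/-- `B = [[0,−i],[i,0]]`. -/
def Bm : Matrix (Fin 2) (Fin 2) GaussianInt := !![0, -gi; gi, 0]

/-- The 2×2 identity matrix. -/
def I2 : Matrix (Fin 2) (Fin 2) GaussianInt := 1

/-- Kronecker product of square matrices, with the standard identification of the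
index set `Fin m × Fin n` with `Fin (m*n)`. -/
def kron {m n : ℕ} (A : Matrix (Fin m) (Fin m) GaussianInt)
    (B : Matrix (Fin n) (Fin n) GaussianInt) :
    Matrix (Fin (m * n)) (Fin (m * n)) GaussianInt :=
  Matrix.reindex finProdFinEquiv finProdFinEquiv (Matrix.kroneckerMap (· * ·) A B)

/-- Iterated Kronecker power `A^{⊗t}`. -/
def kronPow (A : Matrix (Fin 2) (Fin 2) GaussianInt) :
    (t : ℕ) → Matrix (Fin (2 ^ t)) (Fin (2 ^ t)) GaussianInt
  | 0 => 1
  | t + 1 => Matrix.reindex (finCongr (pow_succ 2 t).symm) (finCongr (pow_succ 2 t).symm)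
      (kron (kronPow A t) A)

theorem sizeEq (k : ℕ) (i : Fin (2 * k)) :
    2 ^ (k - 1 - i.val / 2) * 2 * 2 ^ (i.val / 2) = 2 ^ k := by
  have h1 : i.val < 2 * k := i.isLt
  have h2 : (k - 1 - i.val / 2) + 1 + i.val / 2 = k := by omega
  calc 2 ^ (k - 1 - i.val / 2) * 2 * 2 ^ (i.val / 2)
      = 2 ^ ((k - 1 - i.val / 2) + 1 + i.val / 2) := by rw [pow_add, pow_add, pow_one]
    _ = 2 ^ k := by rw [h2]

/-- `rhoVec k i` is `ρₖ(e_{i+1})`, the matrix representing the `(i+1)`-st vector generator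
(`i : Fin (2*k)` is 0-based, so `i = 2j-2` encodes `e_{2j-1}` and `i = 2j-1` encodes `e_{2j}`):
`ρₖ(e_{2j−1}) = I₂^{⊗(k−j)} ⊗ E₁ ⊗ B^{⊗(j−1)}` and `ρₖ(e_{2j}) = I₂^{⊗(k−j)} ⊗ E₂ ⊗ B^{⊗(j−1)}`. -/
def rhoVec (k : ℕ) (i : Fin (2 * k)) : Matrix (Fin (2 ^ k)) (Fin (2 ^ k)) GaussianInt :=
  Matrix.reindex (finCongr (sizeEq k i)) (finCongr (sizeEq k i))
    (kron (kron (kronPow I2 (k - 1 - i.val / 2)) (if i.val % 2 = 0 then E1 else E2))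
      (kronPow Bm (i.val / 2)))

/-- `rho k μ` is `ρₖ(e_μ)`: the product of the `ρₖ(e_i)` for `i ∈ μ` taken in increasing order
(`μ : Finset (Fin (2*k))` is the 0-based version of a subset of `{1, …, 2k}`). -/
def rho (k : ℕ) (μ : Finset (Fin (2 * k))) : Matrix (Fin (2 ^ k)) (Fin (2 ^ k)) GaussianInt :=
  ((μ.sort (· ≤ ·)).map (rhoVec k)).prod

/-- The quotient ring `ℤ[i]/2ℤ[i]`. -/
abbrev Rbar : Type := GaussianInt ⧸ Ideal.span ({2} : Set GaussianInt)

/-- Reduction `ℤ[i] → ℤ[i]/2ℤ[i]`. -/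
def red : GaussianInt →+* Rbar := Ideal.Quotient.mk _

/-- `rhoBar k μ` is the entrywise reduction of `ρₖ(e_μ)` mod `2ℤ[i]`. -/
def rhoBar (k : ℕ) (μ : Finset (Fin (2 * k))) : Matrix (Fin (2 ^ k)) (Fin (2 ^ k)) Rbar :=
  (rho k μ).map red

/-- The shape of a matrix: the 0–1 matrix recording the positions of nonzero entries. -/
def Sh {n : ℕ} (M : Matrix (Fin n) (Fin n) GaussianInt) : Matrix (Fin n) (Fin n) GaussianInt :=
  Matrix.of fun r s => if M r s = 0 then 0 else 1

/-- A matrix has real type if all its nonzero entries lie in `{1, −1}`. -/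
def RealType {n : ℕ} (M : Matrix (Fin n) (Fin n) GaussianInt) : Prop :=
  ∀ r s, M r s ≠ 0 → M r s = 1 ∨ M r s = -1

/-- A matrix has imaginary type if all its nonzero entries lie in `{i, −i}`. -/
def ImagType {n : ℕ} (M : Matrix (Fin n) (Fin n) GaussianInt) : Prop :=
  ∀ r s, M r s ≠ 0 → M r s = gi ∨ M r s = -gi


def gb : Rbar := red gi

theorem two_re : (2 : GaussianInt).re = 2 := by decide

theorem two_im : (2 : GaussianInt).im = 0 := by decide

theorem two_dvd_iff (z : GaussianInt) : (2 : GaussianInt) ∣ z ↔ 2 ∣ z.re ∧ 2 ∣ z.im := by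
  constructor
  · rintro ⟨w, rfl⟩
    exact ⟨⟨w.re, by simp [Zsqrtd.re_mul, two_re, two_im]⟩,
           ⟨w.im, by simp [Zsqrtd.im_mul, two_re, two_im]⟩⟩
  · rintro ⟨⟨a, ha⟩, ⟨b, hb⟩⟩
    exact ⟨⟨a, b⟩, by ext <;> simp [Zsqrtd.re_mul, Zsqrtd.im_mul, two_re, two_im, ha, hb]⟩

theorem gb_ne_zero : gb ≠ 0 := by
  intro h
  have h' : Ideal.Quotient.mk (Ideal.span ({2} : Set GaussianInt)) gi = 0 := h
  rw [Ideal.Quotient.eq_zero_iff_mem, Ideal.mem_span_singleton, two_dvd_iff] at h'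
  simp [gi] at h'

theorem gb_ne_one : gb ≠ 1 := by
  intro h
  have h1 : Ideal.Quotient.mk (Ideal.span ({2} : Set GaussianInt)) gi
      = Ideal.Quotient.mk _ 1 := by rw [map_one]; exact h
  rw [Ideal.Quotient.eq, Ideal.mem_span_singleton, two_dvd_iff] at h1
  simp [gi, Zsqrtd.re_sub, Zsqrtd.im_sub] at h1

theorem gb_sq : gb * gb = 1 := by
  have h : gi * gi = -1 := by ext <;> simp [gi, Zsqrtd.re_mul, Zsqrtd.im_mul]
  have h2 : gb * gb = red (-1) := by rw [gb, ← _root_.map_mul, h]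
  rw [h2]
  show Ideal.Quotient.mk _ (-1 : GaussianInt) = Ideal.Quotient.mk _ (1 : GaussianInt)
  rw [Ideal.Quotient.eq, Ideal.mem_span_singleton]
  exact ⟨-1, by ring⟩

theorem rbar_nontrivial : (1 : Rbar) ≠ 0 := by
  intro h
  have h' : Ideal.Quotient.mk (Ideal.span ({2} : Set GaussianInt)) 1 = 0 := h
  rw [Ideal.Quotient.eq_zero_iff_mem, Ideal.mem_span_singleton, two_dvd_iff] at h'
  simp at h'

theorem gb_pow_sq (m : ℕ) : gb ^ m * gb ^ m = 1 := by
  rw [← mul_pow, gb_sq, one_pow]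

theorem gb_pow_ne_zero (m : ℕ) : gb ^ m ≠ 0 := by
  intro h
  have := gb_pow_sq m
  rw [h, mul_zero] at this
  exact rbar_nontrivial this.symm

theorem gb_pow_mod (m : ℕ) : gb ^ m = gb ^ (m % 2) := by
  conv_lhs => rw [← Nat.div_add_mod m 2]
  rw [pow_add, pow_mul, sq, gb_sq, one_pow, one_mul]

def Nmat (n : ℕ) (c : Rbar) (v : ℕ) : Matrix (Fin n) (Fin n) Rbar :=
  Matrix.of fun r s => if (s : ℕ) = (r : ℕ) ^^^ v then c else 0

theorem Nmat_apply (n : ℕ) (c : Rbar) (v : ℕ) (r s : Fin n) :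
    Nmat n c v r s = if (s : ℕ) = (r : ℕ) ^^^ v then c else 0 := rfl

theorem Nmat_one (n : ℕ) : Nmat n 1 0 = 1 := by
  ext r s
  simp [Nmat_apply, Matrix.one_apply, Fin.ext_iff, eq_comm]

theorem Nmat_mul {k : ℕ} {c d : Rbar} {v w : ℕ} (hv : v < 2 ^ k) (hw : w < 2 ^ k) :
    Nmat (2 ^ k) c v * Nmat (2 ^ k) d w = Nmat (2 ^ k) (c * d) (v ^^^ w) := by
  ext r s
  rw [Matrix.mul_apply]
  have hx : (r : ℕ) ^^^ v < 2 ^ k := Nat.xor_lt_two_pow r.isLt hv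
  rw [Finset.sum_eq_single (⟨(r : ℕ) ^^^ v, hx⟩ : Fin (2 ^ k))]
  · by_cases h : (s : ℕ) = ((r : ℕ) ^^^ v) ^^^ w
    · have h2 : (s : ℕ) = (r : ℕ) ^^^ (v ^^^ w) := by rw [h, Nat.xor_assoc]
      simp [Nmat_apply, h, h2, Nat.xor_assoc]
    · have h2 : ¬((s : ℕ) = (r : ℕ) ^^^ (v ^^^ w)) := by rwa [← Nat.xor_assoc]
      simp [Nmat_apply, h, h2, Nat.xor_assoc]
  · intro u _ hu
    rw [Nmat_apply, if_neg (fun h => hu (Fin.ext h)), zero_mul]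
  · intro h
    exact absurd (Finset.mem_univ _) h

theorem Nmat_reindex {m n : ℕ} (h : m = n) (c : Rbar) (v : ℕ) :
    Matrix.reindex (finCongr h) (finCongr h) (Nmat m c v) = Nmat n c v := by
  subst h; ext r s; rfl

theorem xor_div_pow (x y q : ℕ) : (x ^^^ y) / 2 ^ q = x / 2 ^ q ^^^ y / 2 ^ q := by
  simp only [← Nat.shiftRight_eq_div_pow]
  exact Nat.eq_of_testBit_eq fun i => by simp [Nat.testBit_shiftRight]

theorem xor_mod_pow (x y q : ℕ) : (x ^^^ y) % 2 ^ q = x % 2 ^ q ^^^ y % 2 ^ q :=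
  Nat.eq_of_testBit_eq fun i => by simp [Nat.testBit_mod_two_pow, Bool.and_xor_distrib_left]

-- reindex commutes with map

theorem map_reindex {m n : ℕ} (e : Fin m ≃ Fin n) (M : Matrix (Fin m) (Fin m) GaussianInt) :
    (Matrix.reindex e e M).map red = Matrix.reindex e e (M.map red) := by
  ext r s; rfl

theorem xor_decomp_iff {q : ℕ} (r s u : ℕ) :
    s = r ^^^ u ↔ (s / 2 ^ q = r / 2 ^ q ^^^ u / 2 ^ q ∧ s % 2 ^ q = r % 2 ^ q ^^^ u % 2 ^ q) := by
  constructor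
  · rintro rfl
    exact ⟨xor_div_pow r u q, xor_mod_pow r u q⟩
  · rintro ⟨h1, h2⟩
    have hs := Nat.div_add_mod s (2 ^ q)
    have hx := Nat.div_add_mod (r ^^^ u) (2 ^ q)
    rw [h1, h2, ← xor_div_pow, ← xor_mod_pow] at hs
    omega

theorem kron_red {m q n : ℕ} (hn : n = 2 ^ q)
    (A : Matrix (Fin m) (Fin m) GaussianInt) (B : Matrix (Fin n) (Fin n) GaussianInt)
    {c d : Rbar} {v w : ℕ}
    (hA : A.map red = Nmat m c v) (hB : B.map red = Nmat n d w) (hw : w < n) :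
    (kron A B).map red = Nmat (m * n) (c * d) (v * n + w) := by
  subst hn
  ext r s
  have key : ∀ (x : Fin (m * 2 ^ q)), (finProdFinEquiv.symm x).1.1 = (x : ℕ) / 2 ^ q ∧
      (finProdFinEquiv.symm x).2.1 = (x : ℕ) % 2 ^ q := by
    intro x
    exact ⟨Fin.coe_divNat x, Fin.coe_modNat x⟩
  have hq : 0 < 2 ^ q := Nat.pow_pos (by norm_num)
  have hdiv : (v * 2 ^ q + w) / 2 ^ q = v := by
    rw [mul_comm, Nat.mul_add_div hq, Nat.div_eq_of_lt hw, Nat.add_zero]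
  have hmod : (v * 2 ^ q + w) % 2 ^ q = w := by
    rw [mul_comm, Nat.mul_add_mod, Nat.mod_eq_of_lt hw]
  have lhs : ((kron A B).map red) r s
      = (A.map red) (finProdFinEquiv.symm r).1 (finProdFinEquiv.symm s).1 *
        (B.map red) (finProdFinEquiv.symm r).2 (finProdFinEquiv.symm s).2 := by
    simp [kron, Matrix.map_apply, Matrix.reindex_apply, Matrix.submatrix_apply,
      Matrix.kroneckerMap_apply, _root_.map_mul]
  rw [lhs, hA, hB, Nmat_apply, Nmat_apply, (key r).1, (key s).1, (key r).2, (key s).2,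
    Nmat_apply]
  have hcond : ((s : ℕ) = (r : ℕ) ^^^ (v * 2 ^ q + w)) ↔
      ((s : ℕ) / 2 ^ q = (r : ℕ) / 2 ^ q ^^^ v ∧ (s : ℕ) % 2 ^ q = (r : ℕ) % 2 ^ q ^^^ w) := by
    rw [xor_decomp_iff (q := q), hdiv, hmod]
  by_cases h1 : (s : ℕ) / 2 ^ q = (r : ℕ) / 2 ^ q ^^^ v <;>
    by_cases h2 : (s : ℕ) % 2 ^ q = (r : ℕ) % 2 ^ q ^^^ w <;>
    simp [h1, h2, hcond]

theorem map_red_one (n : ℕ) : (1 : Matrix (Fin n) (Fin n) GaussianInt).map red = 1 :=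
  Matrix.map_one red.toFun red.map_zero red.map_one

theorem kronPow_red {A : Matrix (Fin 2) (Fin 2) GaussianInt} {c : Rbar} {w : ℕ}
    (hA : A.map red = Nmat 2 c w) (hw : w < 2) (t : ℕ) :
    (kronPow A t).map red = Nmat (2 ^ t) (c ^ t) ((2 ^ t - 1) * w) := by
  induction t with
  | zero =>
    show (1 : Matrix (Fin 1) (Fin 1) GaussianInt).map red = _
    rw [map_red_one]
    simp [Nmat_one]
  | succ t ih =>
    show (Matrix.reindex (finCongr (pow_succ 2 t).symm) (finCongr (pow_succ 2 t).symm)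
        (kron (kronPow A t) A)).map red = _
    rw [map_reindex, kron_red (q := 1) (by norm_num) _ _ ih hA (by omega), Nmat_reindex]
    have h1 : 2 ^ t ≥ 1 := Nat.one_le_two_pow
    have h2 : (2 ^ t - 1) * w * 2 + w = (2 ^ (t + 1) - 1) * w := by
      rw [pow_succ]
      interval_cases w <;> omega
    rw [h2, ← pow_succ]

theorem red_neg_gi : red (-gi) = gb := by
  show Ideal.Quotient.mk _ (-gi) = Ideal.Quotient.mk _ gi
  rw [Ideal.Quotient.eq, Ideal.mem_span_singleton]
  exact ⟨-gi, by ring⟩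

theorem E1_red : E1.map red = Nmat 2 gb 0 := by
  ext r s
  fin_cases r <;> fin_cases s <;>
    simp [E1, Nmat_apply, Matrix.map_apply, red_neg_gi, gb]

theorem E2_red : E2.map red = Nmat 2 gb 1 := by
  ext r s
  fin_cases r <;> fin_cases s <;>
    simp [E2, Nmat_apply, Matrix.map_apply, red_neg_gi, gb]

theorem Bm_red : Bm.map red = Nmat 2 gb 1 := by
  ext r s
  fin_cases r <;> fin_cases s <;>
    simp [Bm, Nmat_apply, Matrix.map_apply, red_neg_gi, gb]

theorem I2_red : I2.map red = Nmat 2 1 0 := by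
  rw [I2, map_red_one, Nmat_one]

def vfun {k : ℕ} (i : Fin (2 * k)) : ℕ := 2 ^ (i.val / 2 + i.val % 2) - 1

def efun {k : ℕ} (i : Fin (2 * k)) : ℕ := i.val / 2 + 1

theorem vfun_lt {k : ℕ} (i : Fin (2 * k)) : vfun i < 2 ^ k := by
  have h1 : i.val < 2 * k := i.isLt
  have h2 : i.val / 2 + i.val % 2 ≤ k := by omega
  have h3 : 2 ^ (i.val / 2 + i.val % 2) ≤ 2 ^ k := Nat.pow_le_pow_right (by norm_num) h2
  have h4 : 1 ≤ 2 ^ (i.val / 2 + i.val % 2) := Nat.one_le_two_pow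
  unfold vfun
  omega

theorem rhoVec_red (k : ℕ) (i : Fin (2 * k)) :
    (rhoVec k i).map red = Nmat (2 ^ k) (gb ^ efun i) (vfun i) := by
  have hE : (if i.val % 2 = 0 then E1 else E2).map red = Nmat 2 gb (i.val % 2) := by
    rcases Nat.mod_two_eq_zero_or_one i.val with h | h
    · rw [if_pos h, h]
      exact E1_red
    · rw [if_neg (by omega), h]
      exact E2_red
  have hI : (kronPow I2 (k - 1 - i.val / 2)).map red
      = Nmat (2 ^ (k - 1 - i.val / 2)) 1 0 := by
    have := kronPow_red I2_red (by norm_num) (k - 1 - i.val / 2)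
    simpa using this
  have hBm := kronPow_red Bm_red (by norm_num) (i.val / 2)
  have hinner := kron_red (q := 1) (by norm_num) _ _ hI hE (by omega)
  have houter := kron_red (q := i.val / 2) rfl _ _ hinner hBm
    (by have : 1 ≤ 2 ^ (i.val / 2) := Nat.one_le_two_pow
        have : (2 ^ (i.val / 2) - 1) * 1 < 2 ^ (i.val / 2) := by omega
        simpa using this)
  rw [rhoVec, map_reindex, houter, Nmat_reindex]
  have hc : 1 * gb * gb ^ (i.val / 2) = gb ^ efun i := by
    rw [one_mul, ← pow_succ']
    rfl
  have hv : (0 * 2 + i.val % 2) * 2 ^ (i.val / 2) + (2 ^ (i.val / 2) - 1) * 1 = vfun i := by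
    have h1 : 1 ≤ 2 ^ (i.val / 2) := Nat.one_le_two_pow
    rcases Nat.mod_two_eq_zero_or_one i.val with h | h
    · simp [h, vfun]
    · have h2 : 2 ^ (i.val / 2 + 1) = 2 ^ (i.val / 2) * 2 := pow_succ 2 _
      simp [h, vfun, h2]
      omega
  rw [hc, hv]

theorem list_red (k : ℕ) (l : List (Fin (2 * k))) :
    ((l.map (rhoVec k)).prod).map red
      = Nmat (2 ^ k) (gb ^ (l.map efun).sum) (l.foldr (fun i a => vfun i ^^^ a) 0)
    ∧ l.foldr (fun i a => vfun i ^^^ a) 0 < 2 ^ k := by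
  induction l with
  | nil =>
    refine ⟨?_, Nat.pow_pos (by norm_num)⟩
    simp only [List.map_nil, List.prod_nil, List.foldr_nil, List.sum_nil, pow_zero]
    rw [map_red_one, Nmat_one]
  | cons i l ih =>
    refine ⟨?_, Nat.xor_lt_two_pow (vfun_lt i) ih.2⟩
    simp only [List.map_cons, List.prod_cons, List.foldr_cons, List.sum_cons]
    rw [Matrix.map_mul, rhoVec_red, ih.1, Nmat_mul (vfun_lt i) ih.2, ← pow_add]

instance : Std.Commutative (fun x1 x2 : ℕ => x1 ^^^ x2) := ⟨Nat.xor_comm⟩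
instance : Std.Associative (fun x1 x2 : ℕ => x1 ^^^ x2) := ⟨Nat.xor_assoc⟩

theorem fold_lt (k : ℕ) (μ : Finset (Fin (2 * k))) :
    Finset.fold (fun x1 x2 : ℕ => x1 ^^^ x2) 0 vfun μ < 2 ^ k := by
  classical
  induction μ using Finset.induction with
  | empty =>
    rw [Finset.fold_empty]
    exact Nat.pow_pos (by norm_num)
  | insert _ _ h ih =>
    rw [Finset.fold_insert h]
    exact Nat.xor_lt_two_pow (vfun_lt _) ih

theorem rhoBar_eq (k : ℕ) (μ : Finset (Fin (2 * k))) :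
    rhoBar k μ = Nmat (2 ^ k) (gb ^ (μ.sum efun)) (Finset.fold (fun x1 x2 : ℕ => x1 ^^^ x2) 0 vfun μ) := by
  rw [rhoBar, rho, (list_red k (μ.sort (· ≤ ·))).1]
  have hperm : ((μ.sort (· ≤ ·)) : Multiset (Fin (2 * k))) = μ.val := Finset.sort_eq μ _
  have hsum : μ.sum efun = (List.map efun (μ.sort (· ≤ ·))).sum := by
    rw [show μ.sum efun = (μ.val.map efun).sum from rfl, ← hperm, Multiset.map_coe,
      Multiset.sum_coe]
  have hfold : Finset.fold (fun x1 x2 : ℕ => x1 ^^^ x2) 0 vfun μ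
      = List.foldr (fun i a => vfun i ^^^ a) 0 (μ.sort (· ≤ ·)) := by
    rw [show Finset.fold (fun x1 x2 : ℕ => x1 ^^^ x2) 0 vfun μ
        = ((μ.val.map vfun).foldr (fun x1 x2 : ℕ => x1 ^^^ x2) 0 : ℕ) from rfl, ← hperm, Multiset.map_coe,
      Multiset.coe_foldr, List.foldr_map]
  rw [hsum, hfold]

theorem surj (k : ℕ) (hk : 1 ≤ k) :
    ∀ v : ℕ, v < 2 ^ k → ∀ a : ZMod 2, ∃ μ : Finset (Fin (2 * k)),
      ((μ.sum efun : ℕ) : ZMod 2) = a ∧ Finset.fold (fun x1 x2 : ℕ => x1 ^^^ x2) 0 vfun μ = v ∧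
      ∀ i ∈ μ, vfun i < 2 ^ v.size := by
  have hZ : ∀ b : ZMod 2, b = 0 ∨ b = 1 := by decide
  intro v
  induction v using Nat.strong_induction_on with
  | _ v IH =>
    intro hv a
    rcases Nat.eq_zero_or_pos v with hv0 | hv0
    · subst hv0
      rcases hZ a with rfl | rfl
      · exact ⟨∅, by simp, by simp, by simp⟩
      · refine ⟨{⟨0, by omega⟩}, ?_, ?_, ?_⟩
        · simp [efun]
        · simp [vfun]
        · intro i hi
          rw [Finset.mem_singleton] at hi
          subst hi
          simp [vfun]
    · set t := v.size with htdef
      have ht1 : 1 ≤ t := Nat.size_pos.mpr hv0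
      have htk : t ≤ k := Nat.size_le.mpr hv
      have hvt : v < 2 ^ t := Nat.lt_size_self v
      have hvt2 : 2 ^ (t - 1) ≤ v := by
        by_contra h
        push_neg at h
        have := Nat.size_le.mpr h
        omega
      have hpow : 2 ^ t = 2 ^ (t - 1) * 2 := by
        rw [← pow_succ]
        congr 1
        omega
      have h1p : 1 ≤ 2 ^ (t - 1) := Nat.one_le_two_pow
      set w := v ^^^ (2 ^ t - 1) with hwdef
      have hwlt : w < 2 ^ (t - 1) := by
        have hdiv : w / 2 ^ (t - 1) = v / 2 ^ (t - 1) ^^^ (2 ^ t - 1) / 2 ^ (t - 1) :=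
          xor_div_pow v (2 ^ t - 1) (t - 1)
        have hv1 : v / 2 ^ (t - 1) = 1 := Nat.div_eq_of_lt_le (by omega) (by omega)
        have h21 : (2 ^ t - 1) / 2 ^ (t - 1) = 1 := Nat.div_eq_of_lt_le (by omega) (by omega)
        rw [hv1, h21, Nat.xor_self] at hdiv
        have hm := Nat.mod_lt w (show 0 < 2 ^ (t - 1) by omega)
        have hdm := Nat.div_add_mod w (2 ^ (t - 1))
        rw [hdiv, Nat.mul_zero, Nat.zero_add] at hdm
        rw [← hdm]
        exact hm
      have hwv : w < v := lt_of_lt_of_le hwlt hvt2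
      have hwk : w < 2 ^ k :=
        lt_of_lt_of_le hwlt (Nat.pow_le_pow_right (by norm_num) (by omega))
      obtain ⟨μ', hs', hf', hb'⟩ := IH w hwv hwk (a - (t : ZMod 2))
      have hwsize : w.size ≤ t - 1 := Nat.size_le.mpr hwlt
      have hle : 2 ^ w.size ≤ 2 ^ (t - 1) := Nat.pow_le_pow_right (by norm_num) hwsize
      set i0 : Fin (2 * k) := ⟨2 * t - 1, by omega⟩ with hi0def
      have hv0i : vfun i0 = 2 ^ t - 1 := by
        have hval : (i0 : ℕ) = 2 * t - 1 := rfl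
        unfold vfun
        rw [hval, show (2 * t - 1) / 2 = t - 1 by omega, show (2 * t - 1) % 2 = 1 by omega,
          show t - 1 + 1 = t by omega]
      have he0 : efun i0 = t := by
        have hval : (i0 : ℕ) = 2 * t - 1 := rfl
        unfold efun
        rw [hval]
        omega
      have hnot : i0 ∉ μ' := by
        intro hmem
        have hb := hb' i0 hmem
        rw [hv0i] at hb
        omega
      refine ⟨insert i0 μ', ?_, ?_, ?_⟩
      · rw [Finset.sum_insert hnot, he0]
        rw [Nat.cast_add, hs']
        ring
      · rw [Finset.fold_insert hnot, hf', hv0i, hwdef, Nat.xor_comm v, ← Nat.xor_assoc, Nat.xor_self, Nat.zero_xor]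
      · intro j hj
        rcases Finset.mem_insert.mp hj with rfl | hj'
        · rw [hv0i]
          omega
        · have := hb' j hj'
          omega

/-- The `2^{2k}` generators of the Clifford algebra `Cl(ℂ^{2k})` give exactly `2^{k+1}` distinct
actions on the 2-torsion points of the Dirac spinor torus, each of which is an involution. -/
theorem card_rhoBar_range (k : ℕ) (hk : 1 ≤ k) :
    Set.ncard (Set.range (fun μ : Finset (Fin (2 * k)) => rhoBar k μ)) = 2 ^ (k + 1) ∧
    ∀ μ : Finset (Fin (2 * k)), rhoBar k μ * rhoBar k μ = 1 := by
  have hZ : ∀ b : ZMod 2, b = 0 ∨ b = 1 := by decide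
  have h0 : (0 : ℕ) < 2 ^ k := Nat.pow_pos (by norm_num)
  constructor
  · set Φ : ZMod 2 × Fin (2 ^ k) → Matrix (Fin (2 ^ k)) (Fin (2 ^ k)) Rbar :=
      fun p => Nmat (2 ^ k) (gb ^ p.1.val) p.2.val with hΦ
    have hrange : Set.range (fun μ : Finset (Fin (2 * k)) => rhoBar k μ) = Set.range Φ := by
      ext M
      constructor
      · rintro ⟨μ, rfl⟩
        refine ⟨(((μ.sum efun : ℕ) : ZMod 2),
          ⟨Finset.fold (fun x1 x2 : ℕ => x1 ^^^ x2) 0 vfun μ, fold_lt k μ⟩), ?_⟩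
        show Nmat (2 ^ k) (gb ^ (((μ.sum efun : ℕ) : ZMod 2)).val)
            (Finset.fold (fun x1 x2 : ℕ => x1 ^^^ x2) 0 vfun μ) = rhoBar k μ
        rw [rhoBar_eq, ZMod.val_natCast, ← gb_pow_mod]
      · rintro ⟨⟨a, v⟩, rfl⟩
        obtain ⟨μ, hs, hf, -⟩ := surj k hk v.val v.isLt a
        refine ⟨μ, ?_⟩
        show rhoBar k μ = Nmat (2 ^ k) (gb ^ a.val) (v : ℕ)
        rw [rhoBar_eq, hf]
        congr 1
        have hval : (μ.sum efun) % 2 = a.val := by rw [← ZMod.val_natCast, hs]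
        rw [gb_pow_mod, hval]
    have hinj : Function.Injective Φ := by
      rintro ⟨a, v⟩ ⟨b, w⟩ h
      simp only [hΦ] at h
      have he := congrFun (congrFun h ⟨0, h0⟩) v
      rw [Nmat_apply, Nmat_apply, Nat.zero_xor, Nat.zero_xor, if_pos rfl] at he
      by_cases hvw : (v : ℕ) = (w : ℕ)
      · rw [if_pos hvw] at he
        have hv : v = w := Fin.ext hvw
        have hab : a = b := by
          rcases hZ a with rfl | rfl <;> rcases hZ b with rfl | rfl
          · rfl
          · exact absurd he.symm gb_ne_one
          · exact absurd he gb_ne_one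
          · rfl
        rw [hab, hv]
      · rw [if_neg hvw] at he
        exact absurd he (gb_pow_ne_zero _)
    rw [hrange, ← Set.image_univ, Set.ncard_image_of_injective _ hinj, Set.ncard_univ,
      Nat.card_prod, Nat.card_zmod, Nat.card_eq_fintype_card, Fintype.card_fin, pow_succ]
    ring
  · intro μ
    rw [rhoBar_eq, Nmat_mul (fold_lt k μ) (fold_lt k μ), Nat.xor_self,
      gb_pow_sq (μ.sum efun), Nmat_one]

end DiracSpinor
end

section
/- For every k ≥ 1 and every μ ⊆ {1, …, 2k}, either every nonzero entry of ρₖ(e_μ) lies in {1, −1}, or every nonzero entry of ρₖ(e_μ) lies in {i, −i}; that is, ρₖ(e_μ) has either real type or imaginary type. -/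
open Matrix

namespace DiracSpinor

/-- A monomial matrix with all nonzero entries equal to `±c`. -/
def Mono {α : Type*} [Fintype α] [DecidableEq α] (c : GaussianInt)
    (M : Matrix α α GaussianInt) : Prop :=
  ∃ σ : Equiv.Perm α, ∀ r s,
    (s = σ r → M r s = c ∨ M r s = -c) ∧ (s ≠ σ r → M r s = 0)

theorem mono_one {α : Type*} [Fintype α] [DecidableEq α] :
    Mono (1 : GaussianInt) (1 : Matrix α α GaussianInt) := by
  refine ⟨1, fun r s => ⟨fun h => ?_, fun h => ?_⟩⟩
  · subst h; simp [Matrix.one_apply]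
  · rw [Matrix.one_apply_ne' (by simpa using h)]

theorem mono_mul {α : Type*} [Fintype α] [DecidableEq α] {c d : GaussianInt}
    {M N : Matrix α α GaussianInt} (hM : Mono c M) (hN : Mono d N) :
    Mono (c * d) (M * N) := by
  obtain ⟨σ, hσ⟩ := hM
  obtain ⟨τ, hτ⟩ := hN
  refine ⟨σ.trans τ, fun r s => ?_⟩
  have hsum : (M * N) r s = M r (σ r) * N (σ r) s := by
    rw [Matrix.mul_apply]
    refine Finset.sum_eq_single (σ r) (fun j _ hj => ?_) (fun h => absurd (Finset.mem_univ _) h)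
    rw [(hσ r j).2 hj, zero_mul]
  constructor
  · intro h
    have h1 := (hσ r (σ r)).1 rfl
    have h2 := (hτ (σ r) s).1 h
    rw [hsum]
    rcases h1 with h1 | h1 <;> rcases h2 with h2 | h2 <;> rw [h1, h2] <;>
      simp [mul_comm, mul_left_comm]
  · intro h
    rw [hsum, (hτ (σ r) s).2 h, mul_zero]

theorem mono_reindex {α β : Type*} [Fintype α] [DecidableEq α] [Fintype β] [DecidableEq β]
    {c : GaussianInt} {M : Matrix α α GaussianInt} (hM : Mono c M) (e : α ≃ β) :
    Mono c (Matrix.reindex e e M) := by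
  obtain ⟨σ, hσ⟩ := hM
  refine ⟨(e.symm.trans σ).trans e, fun r s => ?_⟩
  constructor
  · intro h
    have : e.symm s = σ (e.symm r) := by
      subst h; simp
    exact (hσ (e.symm r) (e.symm s)).1 this
  · intro h
    have : e.symm s ≠ σ (e.symm r) := by
      intro hc
      exact h (by simpa using congrArg e hc)
    exact (hσ (e.symm r) (e.symm s)).2 this

theorem mono_kronecker {α β : Type*} [Fintype α] [DecidableEq α] [Fintype β] [DecidableEq β]
    {c d : GaussianInt} {A : Matrix α α GaussianInt} {B : Matrix β β GaussianInt}
    (hA : Mono c A) (hB : Mono d B) :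
    Mono (c * d) (Matrix.kroneckerMap (· * ·) A B) := by
  obtain ⟨σ, hσ⟩ := hA
  obtain ⟨τ, hτ⟩ := hB
  refine ⟨σ.prodCongr τ, fun r s => ?_⟩
  obtain ⟨a, b⟩ := r
  obtain ⟨a', b'⟩ := s
  constructor
  · intro h
    have h1 : a' = σ a := congrArg Prod.fst h
    have h2 : b' = τ b := congrArg Prod.snd h
    have hA' := (hσ a a').1 h1
    have hB' := (hτ b b').1 h2
    show A a a' * B b b' = c * d ∨ A a a' * B b b' = -(c * d)
    rcases hA' with h3 | h3 <;> rcases hB' with h4 | h4 <;> rw [h3, h4] <;>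
      simp [mul_comm, mul_left_comm]
  · intro h
    show A a a' * B b b' = 0
    by_cases h1 : a' = σ a
    · have h2 : b' ≠ τ b := by
        intro hc; exact h (by simp [Equiv.prodCongr, h1, hc, Prod.ext_iff])
      rw [(hτ b b').2 h2, mul_zero]
    · rw [(hσ a a').2 h1, zero_mul]

theorem mono_kron {m n : ℕ} {c d : GaussianInt}
    {A : Matrix (Fin m) (Fin m) GaussianInt} {B : Matrix (Fin n) (Fin n) GaussianInt}
    (hA : Mono c A) (hB : Mono d B) : Mono (c * d) (kron A B) :=
  mono_reindex (mono_kronecker hA hB) finProdFinEquiv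

theorem gi_sq : gi * gi = -1 := by decide

theorem mono_E1 : Mono gi E1 := by
  refine ⟨1, fun r s => ?_⟩
  fin_cases r <;> fin_cases s <;> simp [E1] <;> decide

theorem mono_E2 : Mono gi E2 := by
  refine ⟨Equiv.swap 0 1, fun r s => ?_⟩
  fin_cases r <;> fin_cases s <;> simp [E2, Equiv.swap_apply_def] <;> decide

theorem mono_Bm : Mono gi Bm := by
  refine ⟨Equiv.swap 0 1, fun r s => ?_⟩
  fin_cases r <;> fin_cases s <;> simp [Bm, Equiv.swap_apply_def] <;> decide

theorem mono_kronPow {c : GaussianInt} {A : Matrix (Fin 2) (Fin 2) GaussianInt}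
    (hA : Mono c A) (t : ℕ) : Mono (c ^ t) (kronPow A t) := by
  induction t with
  | zero => simpa [kronPow] using mono_one
  | succ t ih =>
      have := mono_reindex (mono_kron ih hA) (finCongr (pow_succ 2 t).symm)
      rw [show c ^ t * c = c ^ (t + 1) by rw [pow_succ]] at this
      exact this

theorem mono_rhoVec (k : ℕ) (i : Fin (2 * k)) :
    ∃ T : ℕ, Mono (gi ^ T) (rhoVec k i) := by
  refine ⟨1 + i.val / 2, ?_⟩
  have h1 : Mono ((1 : GaussianInt) ^ (k - 1 - i.val / 2)) (kronPow I2 (k - 1 - i.val / 2)) :=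
    mono_kronPow (by simpa [I2] using (mono_one (α := Fin 2))) _
  have h2 : Mono gi (if i.val % 2 = 0 then E1 else E2) := by
    split <;> [exact mono_E1; exact mono_E2]
  have h3 : Mono (gi ^ (i.val / 2)) (kronPow Bm (i.val / 2)) := mono_kronPow mono_Bm _
  have := mono_reindex (mono_kron (mono_kron h1 h2) h3) (finCongr (sizeEq k i))
  rw [show (1 : GaussianInt) ^ (k - 1 - i.val / 2) * gi * gi ^ (i.val / 2)
      = gi ^ (1 + i.val / 2) by rw [one_pow, one_mul, pow_add, pow_one]] at this
  exact this

theorem mono_listProd (k : ℕ) (l : List (Fin (2 * k))) :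
    ∃ T : ℕ, Mono (gi ^ T) ((l.map (rhoVec k)).prod) := by
  induction l with
  | nil => exact ⟨0, by simpa using mono_one⟩
  | cons a l ih =>
      obtain ⟨T, hT⟩ := ih
      obtain ⟨S, hS⟩ := mono_rhoVec k a
      refine ⟨S + T, ?_⟩
      have := mono_mul hS hT
      rw [← pow_add] at this
      simpa using this

theorem gi_pow_cases (T : ℕ) :
    (gi ^ T = 1 ∨ gi ^ T = -1) ∨ (gi ^ T = gi ∨ gi ^ T = -gi) := by
  induction T with
  | zero => exact Or.inl (Or.inl (pow_zero gi))
  | succ T ih =>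
      rw [pow_succ]
      rcases ih with (h | h) | (h | h) <;> rw [h]
      · exact Or.inr (Or.inl (one_mul gi))
      · exact Or.inr (Or.inr (by rw [neg_mul, one_mul]))
      · exact Or.inl (Or.inr gi_sq)
      · exact Or.inl (Or.inl (by rw [neg_mul, gi_sq, neg_neg]))

/-- Every `ρₖ(e_μ)` has either real type (all nonzero entries in `{1,−1}`) or imaginary
type (all nonzero entries in `{i,−i}`). -/
theorem rho_real_or_imag (k : ℕ) (hk : 1 ≤ k) (μ : Finset (Fin (2 * k))) :
    RealType (rho k μ) ∨ ImagType (rho k μ) := by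
  obtain ⟨T, σ, hσ⟩ := mono_listProd k (μ.sort (· ≤ ·))
  have hentry : ∀ r s, rho k μ r s ≠ 0 → rho k μ r s = gi ^ T ∨ rho k μ r s = -(gi ^ T) := by
    intro r s h
    by_cases hs : s = σ r
    · exact (hσ r s).1 hs
    · exact absurd ((hσ r s).2 hs) h
  rcases gi_pow_cases T with (h | h) | (h | h)
  · left; intro r s hne
    rcases hentry r s hne with he | he <;> rw [he, h]
    · exact Or.inl rfl
    · exact Or.inr rfl
  · left; intro r s hne
    rcases hentry r s hne with he | he <;> rw [he, h]
    · exact Or.inr rfl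
    · exact Or.inl (neg_neg 1)
  · right; intro r s hne
    rcases hentry r s hne with he | he <;> rw [he, h]
    · exact Or.inl rfl
    · exact Or.inr rfl
  · right; intro r s hne
    rcases hentry r s hne with he | he <;> rw [he, h]
    · exact Or.inr rfl
    · exact Or.inl (neg_neg gi)

end DiracSpinor
end
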